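/- arXiv:0911.2684 — 4 statements merged into one kernel-verified Lean document; each statement's English description precedes it below -/
import Mathlib

section
/- Under the substitutions u ↦ (a₁−b)u, v ↦ (a₁−c)v, the map R(b,c): (u,v) ↦ (vF, u/F) with F = ((a₁−b)+(a₀−c)uv)/((a₁−c)+(a₀−b)uv) becomes the map (u,v) ↦ (vp, u/p) with p = (1+κuv)/(1+μuv), where κ = (a₀−c)(a₁−c) and μ = (a₀−b)(a₁−b). That is, with Φ(u,v) = ((a₁−b)u, (a₁−c)v), one has Φ ∘ R_{KdV}(κ,μ) = R(b,c) ∘ Φ wherever all expressions are defined. -/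
noncomputable def RKdV (κ μ : ℂ) : ℂ × ℂ → ℂ × ℂ :=
  fun w =>
    let p := (1 + κ * w.1 * w.2) / (1 + μ * w.1 * w.2)
    (w.2 * p, w.1 / p)

noncomputable def Rbc (a₀ a₁ b c : ℂ) : ℂ × ℂ → ℂ × ℂ :=
  fun w =>
    let F := ((a₁ - b) + (a₀ - c) * w.1 * w.2) / ((a₁ - c) + (a₀ - b) * w.1 * w.2)
    (w.2 * F, w.1 / F)

theorem Rbc_conjugate_RKdV (a₀ a₁ b c : ℂ) (hb : a₁ ≠ b) (hc : a₁ ≠ c)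
    (u v : ℂ)
    (hden : 1 + (a₀ - b) * (a₁ - b) * (u * v) ≠ 0)
    (hnum : 1 + (a₀ - c) * (a₁ - c) * (u * v) ≠ 0) :
    (fun w : ℂ × ℂ => ((a₁ - b) * w.1, (a₁ - c) * w.2))
        (RKdV ((a₀ - c) * (a₁ - c)) ((a₀ - b) * (a₁ - b)) (u, v)) =
      Rbc a₀ a₁ b c ((a₁ - b) * u, (a₁ - c) * v) := by
  have hb' : a₁ - b ≠ 0 := sub_ne_zero.mpr hb
  have hc' : a₁ - c ≠ 0 := sub_ne_zero.mpr hc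
  simp only [RKdV, Rbc, Prod.mk.injEq]
  set A : ℂ := 1 + (a₀ - c) * (a₁ - c) * (u * v) with hA
  set B : ℂ := 1 + (a₀ - b) * (a₁ - b) * (u * v) with hB
  have hF : (a₁ - b) + (a₀ - c) * ((a₁ - b) * u) * ((a₁ - c) * v) = (a₁ - b) * A := by
    rw [hA]; ring
  have hG : (a₁ - c) + (a₀ - b) * ((a₁ - b) * u) * ((a₁ - c) * v) = (a₁ - c) * B := by
    rw [hB]; ring
  have hκ : 1 + (a₀ - c) * (a₁ - c) * u * v = A := by rw [hA]; ring
  have hμ : 1 + (a₀ - b) * (a₁ - b) * u * v = B := by rw [hB]; ring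
  rw [hF, hG, hκ, hμ]
  constructor
  · field_simp
  · field_simp
end

section
/- If ∏_{j=0}^{N−1} β_j u_j satisfies 1 + (−1)^{N−1}λ∏β_ju_j ≠ 0, then the inverse of 𝒰₁ = I + 𝒰⁽⁰⁾Λ is given by (1 + (−1)^{N−1}λ∏_{i}β_iu_i)^{−1}·( I + Σ_{j=1}^{N−1} (−1)^j (∏_{k=0}^{j−1} 𝒰⁽ᵏ⁾) Λ^j ), where here 𝒰⁽ᵏ⁾ = diag(β_k u_k, …, β_{k+N−1}u_{k+N−1}) with indices mod N. -/
open Matrix Finset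

/-- The cyclic shift matrix `Λ`. -/
def shiftLambda (N : ℕ) (lam : ℂ) : Matrix (Fin N) (Fin N) ℂ :=
  Matrix.of fun i j =>
    if (j : ℕ) = (i : ℕ) + 1 then 1
    else if (i : ℕ) = N - 1 ∧ (j : ℕ) = 0 then lam
    else 0

/-- `𝒰⁽ᵏ⁾ = diag(β_k u_k, …, β_{k+N−1} u_{k+N−1})`, indices mod `N`. -/
def calU (N : ℕ) (β u : ZMod N → ℂ) (k : ℕ) : Matrix (Fin N) (Fin N) ℂ :=
  Matrix.diagonal fun j => β ((k : ZMod N) + (j : ℕ)) * u ((k : ZMod N) + (j : ℕ))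

/-- The (diagonal) matrix product `∏_{k=0}^{j−1} 𝒰⁽ᵏ⁾`. -/
def calUProd (N : ℕ) (β u : ZMod N → ℂ) (j : ℕ) : Matrix (Fin N) (Fin N) ℂ :=
  Matrix.diagonal fun i =>
    ∏ k ∈ Finset.range j, (β ((k : ZMod N) + (i : ℕ)) * u ((k : ZMod N) + (i : ℕ)))

lemma shiftLambda_pow (N : ℕ) (hN : 1 ≤ N) (lam : ℂ) (j : ℕ) (hj : j ≤ N) :
    shiftLambda N lam ^ j = Matrix.of fun (i k : Fin N) =>
      if (k : ℕ) = (i : ℕ) + j then 1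
      else if (k : ℕ) + N = (i : ℕ) + j then lam else 0 := by
  induction j with
  | zero =>
    ext i k
    have hk := k.isLt
    have hi := i.isLt
    simp only [pow_zero, Matrix.of_apply]
    by_cases hik : i = k
    · subst hik; simp [Matrix.one_apply]
    · have hik' : (k : ℕ) ≠ (i : ℕ) := fun hh => hik (Fin.ext hh.symm)
      rw [Matrix.one_apply_ne hik, if_neg (by omega), if_neg (by omega)]
  | succ j ih =>
    have hj' : j ≤ N := Nat.le_of_succ_le hj
    rw [pow_succ', ih hj']
    ext i k
    rw [Matrix.mul_apply]
    have hk := k.isLt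
    have hi := i.isLt
    by_cases hilast : (i : ℕ) + 1 < N
    · rw [Fintype.sum_eq_single (⟨(i : ℕ) + 1, hilast⟩ : Fin N) ?_]
      · simp only [shiftLambda, Matrix.of_apply, Fin.val_mk]
        split_ifs <;> (first | ring1 | (exfalso; omega) | simp_all | (exfalso; simp_all))
      · intro m hm
        have hmlt := m.isLt
        have hm' : (m : ℕ) ≠ (i : ℕ) + 1 := by simpa [Fin.ext_iff] using hm
        simp only [shiftLambda, Matrix.of_apply]
        split_ifs <;> (first | ring1 | (exfalso; omega) | simp_all | (exfalso; simp_all))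
    · have hiN : (i : ℕ) = N - 1 := by omega
      rw [Fintype.sum_eq_single (⟨0, by omega⟩ : Fin N) ?_]
      · simp only [shiftLambda, Matrix.of_apply, Fin.val_mk]
        split_ifs <;> (first | ring1 | (exfalso; omega) | simp_all | (exfalso; simp_all))
      · intro m hm
        have hmlt := m.isLt
        have hm' : (m : ℕ) ≠ 0 := by simpa [Fin.ext_iff] using hm
        simp only [shiftLambda, Matrix.of_apply]
        split_ifs <;> (first | ring1 | (exfalso; omega) | simp_all | (exfalso; simp_all))

lemma shiftLambda_pow_self (N : ℕ) (hN : 1 ≤ N) (lam : ℂ) :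
    shiftLambda N lam ^ N = lam • (1 : Matrix (Fin N) (Fin N) ℂ) := by
  rw [shiftLambda_pow N hN lam N le_rfl]
  ext i k
  have hk := k.isLt
  have hi := i.isLt
  simp only [Matrix.of_apply, Matrix.smul_apply, smul_eq_mul]
  by_cases hik : i = k
  · subst hik
    rw [Matrix.one_apply_eq, if_neg (by omega), if_pos (by omega), mul_one]
  · have hik' : (k : ℕ) ≠ (i : ℕ) := fun hh => hik (Fin.ext hh.symm)
    rw [Matrix.one_apply_ne hik, if_neg (by omega), if_neg (by omega), mul_zero]

lemma shiftLambda_mul_diag (N : ℕ) (hN : 1 ≤ N) (lam : ℂ) (f : ZMod N → ℂ) :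
    shiftLambda N lam * Matrix.diagonal (fun i : Fin N => f ((i : ℕ) : ZMod N)) =
      Matrix.diagonal (fun i : Fin N => f (((i : ℕ) : ZMod N) + 1)) * shiftLambda N lam := by
  ext i k
  rw [Matrix.mul_diagonal, Matrix.diagonal_mul]
  simp only [shiftLambda, Matrix.of_apply]
  by_cases h1 : (k : ℕ) = (i : ℕ) + 1
  · rw [if_pos h1]
    have : ((k : ℕ) : ZMod N) = ((i : ℕ) : ZMod N) + 1 := by
      rw [h1]; push_cast; ring
    rw [this, mul_comm]
  · rw [if_neg h1]
    by_cases h2 : (i : ℕ) = N - 1 ∧ (k : ℕ) = 0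
    · rw [if_pos h2]
      have : ((k : ℕ) : ZMod N) = ((i : ℕ) : ZMod N) + 1 := by
        rw [h2.1, h2.2, Nat.cast_zero, ← Nat.cast_add_one,
          show N - 1 + 1 = N by omega, ZMod.natCast_self]
      rw [this, mul_comm]
    · rw [if_neg h2, mul_zero, zero_mul]

lemma prod_range_zmod (N : ℕ) [NeZero N] (f : ZMod N → ℂ) :
    ∏ k ∈ range N, f (k : ZMod N) = ∏ z : ZMod N, f z := by
  refine Finset.prod_nbij' (fun k => ((k : ℕ) : ZMod N)) (fun z => z.val) ?_ ?_ ?_ ?_ ?_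
  · intro a _; exact Finset.mem_univ _
  · intro z _; simpa [Finset.mem_range] using z.val_lt
  · intro a ha; exact ZMod.val_cast_of_lt (Finset.mem_range.mp ha)
  · intro z _; exact ZMod.natCast_rightInverse z
  · intro a _; rfl

lemma prod_shift (N : ℕ) [NeZero N] (f : ZMod N → ℂ) (c : ZMod N) :
    ∏ k ∈ range N, f ((k : ZMod N) + c) = ∏ k ∈ range N, f (k : ZMod N) := by
  rw [prod_range_zmod N (fun z => f (z + c)), prod_range_zmod N f]
  exact Fintype.prod_equiv (Equiv.addRight c) _ _ (fun z => rfl)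

-- the key commutation step
lemma key_step (N : ℕ) (hN : 1 ≤ N) (lam : ℂ) (β u : ZMod N → ℂ) (j : ℕ) :
    (calU N β u 0 * shiftLambda N lam) * (calUProd N β u j * shiftLambda N lam ^ j) =
      calUProd N β u (j + 1) * shiftLambda N lam ^ (j + 1) := by
  set g : ZMod N → ℂ := fun z => ∏ k ∈ range j, (β ((k : ℕ) + z) * u ((k : ℕ) + z)) with hg
  have hD : calUProd N β u j = Matrix.diagonal (fun i : Fin N => g ((i : ℕ) : ZMod N)) := rfl
  have hfun : (fun i : Fin N => β (((0:ℕ) : ZMod N) + ((i : ℕ) : ZMod N)) *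
        u (((0:ℕ) : ZMod N) + ((i : ℕ) : ZMod N)) * g (((i : ℕ) : ZMod N) + 1)) =
      (fun i : Fin N => ∏ k ∈ range (j+1),
        (β (((k:ℕ) : ZMod N) + ((i : ℕ) : ZMod N)) * u (((k:ℕ) : ZMod N) + ((i : ℕ) : ZMod N)))) := by
    funext i
    rw [Finset.prod_range_succ']
    rw [mul_comm]
    congr 1
    simp only [hg]
    refine Finset.prod_congr rfl fun k _ => ?_
    have hk : ((k:ℕ) : ZMod N) + (((i:ℕ) : ZMod N) + 1) =
        (((k+1 : ℕ)) : ZMod N) + ((i:ℕ) : ZMod N) := by push_cast; ring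
    rw [hk]
  calc (calU N β u 0 * shiftLambda N lam) * (calUProd N β u j * shiftLambda N lam ^ j)
      = calU N β u 0 * (shiftLambda N lam * Matrix.diagonal (fun i : Fin N => g ((i : ℕ) : ZMod N)))
        * shiftLambda N lam ^ j := by rw [hD]; noncomm_ring
    _ = calU N β u 0 * (Matrix.diagonal (fun i : Fin N => g (((i : ℕ) : ZMod N) + 1))
        * shiftLambda N lam) * shiftLambda N lam ^ j := by rw [shiftLambda_mul_diag N hN lam g]
    _ = (calU N β u 0 * Matrix.diagonal (fun i : Fin N => g (((i : ℕ) : ZMod N) + 1)))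
        * shiftLambda N lam ^ (j + 1) := by rw [pow_succ']; noncomm_ring
    _ = calUProd N β u (j + 1) * shiftLambda N lam ^ (j + 1) := by
        rw [calU, Matrix.diagonal_mul_diagonal, calUProd, hfun]

lemma calUProd_self (N : ℕ) (hN : 1 ≤ N) (β u : ZMod N → ℂ) :
    calUProd N β u N =
      (∏ j ∈ range N, β (j : ZMod N) * u (j : ZMod N)) • (1 : Matrix (Fin N) (Fin N) ℂ) := by
  haveI : NeZero N := ⟨by omega⟩
  ext i k
  rw [calUProd, Matrix.diagonal_apply, Matrix.smul_apply, Matrix.one_apply]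
  by_cases hik : i = k
  · rw [if_pos hik, if_pos hik, smul_eq_mul, mul_one]
    exact prod_shift N (fun z => β z * u z) ((i : ℕ) : ZMod N)
  · rw [if_neg hik, if_neg hik, smul_zero]


theorem inv_one_add_diagonal_shift (N : ℕ) (hN : 1 ≤ N) (lam : ℂ)
    (β u : ZMod N → ℂ)
    (h : 1 + (-1) ^ (N - 1) * lam * ∏ j ∈ Finset.range N, β (j : ZMod N) * u (j : ZMod N) ≠ 0) :
    (1 + calU N β u 0 * shiftLambda N lam)⁻¹ =
      (1 + (-1) ^ (N - 1) * lam *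
          ∏ j ∈ Finset.range N, β (j : ZMod N) * u (j : ZMod N))⁻¹ •
        (1 + ∑ j ∈ Finset.Ico 1 N,
            (-1 : ℂ) ^ j • (calUProd N β u j * shiftLambda N lam ^ j)) := by
  obtain ⟨M, rfl⟩ : ∃ M, N = M + 1 := ⟨N - 1, by omega⟩
  set P := ∏ j ∈ Finset.range (M+1), β (j : ZMod (M+1)) * u (j : ZMod (M+1)) with hP
  set s : ℂ := 1 + (-1) ^ (M + 1 - 1) * lam * P with hs
  set A := calU (M+1) β u 0 * shiftLambda (M+1) lam with hA
  set T : ℕ → Matrix (Fin (M+1)) (Fin (M+1)) ℂ :=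
    fun j => calUProd (M+1) β u j * shiftLambda (M+1) lam ^ j with hT
  set F : ℕ → Matrix (Fin (M+1)) (Fin (M+1)) ℂ := fun j => (-1:ℂ)^j • T j with hF
  have hA1 : A = T 1 := by
    have hfun : (fun j : Fin (M+1) => β (((0:ℕ) : ZMod (M+1)) + ((j : ℕ) : ZMod (M+1))) *
          u (((0:ℕ) : ZMod (M+1)) + ((j : ℕ) : ZMod (M+1)))) =
        (fun i : Fin (M+1) => ∏ k ∈ Finset.range 1,
          (β (((k:ℕ) : ZMod (M+1)) + ((i : ℕ) : ZMod (M+1))) *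
            u (((k:ℕ) : ZMod (M+1)) + ((i : ℕ) : ZMod (M+1))))) := by
      funext i; rw [Finset.prod_range_one]
    simp only [hA, hT, pow_one, calU, calUProd, hfun]
  have hstep : ∀ j, A * T j = T (j+1) := fun j => key_step (M+1) (by omega) lam β u j
  have hTN : T (M+1) = (lam * P) • (1 : Matrix (Fin (M+1)) (Fin (M+1)) ℂ) := by
    rw [hT]
    simp only
    rw [calUProd_self (M+1) (by omega) β u, shiftLambda_pow_self (M+1) (by omega) lam,
      smul_mul_assoc, Matrix.mul_smul, mul_one, smul_smul, mul_comm]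
  have hAF : ∀ j, A * F j = -F (j+1) := by
    intro j
    simp only [hF]
    rw [Matrix.mul_smul, hstep, pow_succ, mul_neg_one, neg_smul, neg_neg]
  have htel : ∑ j ∈ Finset.Ico 1 (M+1), (F j - F (j+1)) = F 1 - F (M+1) := by
    rw [Finset.sum_Ico_eq_sum_range]
    simp only [Nat.add_sub_cancel]
    have hsub := Finset.sum_range_sub (f := fun i => F (i+1)) M
    calc ∑ i ∈ Finset.range M, (F (1+i) - F (1+i+1))
        = -∑ i ∈ Finset.range M, (F (i+1+1) - F (i+1)) := by
          rw [← Finset.sum_neg_distrib]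
          refine Finset.sum_congr rfl fun i _ => ?_
          rw [Nat.add_comm 1 i]
          abel
      _ = -(F (M+1) - F 1) := by rw [hsub]
      _ = F 1 - F (M+1) := by abel
  have key : (1 + A) * (1 + ∑ j ∈ Finset.Ico 1 (M+1), F j) =
      s • (1 : Matrix (Fin (M+1)) (Fin (M+1)) ℂ) := by
    have expand : (1 + A) * (1 + ∑ j ∈ Finset.Ico 1 (M+1), F j) =
        1 + A + (∑ j ∈ Finset.Ico 1 (M+1), F j + ∑ j ∈ Finset.Ico 1 (M+1), (A * F j)) := by
      rw [mul_add, mul_one, add_mul, one_mul, Finset.mul_sum]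
    have hsum2 : ∑ j ∈ Finset.Ico 1 (M+1), A * F j = ∑ j ∈ Finset.Ico 1 (M+1), -F (j+1) :=
      Finset.sum_congr rfl fun j _ => hAF j
    have hcomb : ∑ j ∈ Finset.Ico 1 (M+1), F j + ∑ j ∈ Finset.Ico 1 (M+1), (-F (j+1)) =
        F 1 - F (M+1) := by
      rw [← Finset.sum_add_distrib, ← htel]
      exact Finset.sum_congr rfl fun j _ => by abel
    have hF1 : F 1 = -A := by simp only [hF]; rw [pow_one, hA1, neg_one_smul]
    have hFN : F (M+1) = (((-1:ℂ)^(M+1)) * (lam * P)) • (1 : Matrix (Fin (M+1)) (Fin (M+1)) ℂ) := by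
      simp only [hF]; rw [hTN, smul_smul]
    have hscal : -(((-1:ℂ)^(M+1) * (lam * P))) = (-1:ℂ)^M * lam * P := by
      rw [pow_succ]; ring
    rw [expand, hsum2, hcomb, hF1, hFN, hs]
    simp only [Nat.add_sub_cancel]
    rw [add_smul, one_smul, ← hscal, neg_smul]
    abel
  have hs0 : s ≠ 0 := h
  refine Matrix.inv_eq_right_inv ?_
  rw [Matrix.mul_smul, key, smul_smul, inv_mul_cancel₀ hs0, one_smul]
end

section
/- Let p_j = u_j v̄_j − 1 and q_j = p_j u_{j+1} + v̄_j p_{j+1}, and let D_n(m) be the n×n tridiagonal determinant with diagonal entries q_m, q_{m+1}, …, q_{m+n−1}, superdiagonal entries −p_m, …, −p_{m+n−2}, and subdiagonal entries −u_{m+1}v̄_{m+1}p_{m+2}, …, −u_{m+n−1}v̄_{m+n−1}p_{m+n}. Then D_n(m) = ∏_{i=1}^{n−1}(u_{m+i}v̄_{m+i} − 1) · Σ_{j=0}^{n} ( ∏_{k=0}^{j−1} v̄_{m+k} · (u_{m+j}v̄_{m+j} − 1) · ∏_{k=j+1}^{n} u_{m+k} ). -/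
open Matrix Finset

/-- `p_j = u_j v̄_j − 1`. -/
def pBKP (u vb : ℤ → ℂ) (j : ℤ) : ℂ := u j * vb j - 1

/-- `q_j = p_j u_{j+1} + v̄_j p_{j+1}`. -/
def qBKP (u vb : ℤ → ℂ) (j : ℤ) : ℂ :=
  pBKP u vb j * u (j + 1) + vb j * pBKP u vb (j + 1)

/-- The `n×n` tridiagonal matrix whose determinant is `D_n(m)`. -/
def triMat (u vb : ℤ → ℂ) (n : ℕ) (m : ℤ) : Matrix (Fin n) (Fin n) ℂ :=
  Matrix.of fun i j =>
    if i = j then qBKP u vb (m + i)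
    else if (j : ℕ) = (i : ℕ) + 1 then -pBKP u vb (m + i)
    else if (i : ℕ) = (j : ℕ) + 1 then
      -(u (m + i) * vb (m + i) * pBKP u vb (m + i + 1))
    else 0

/-
Expanding along the last row, `D_n = det (triMat u vb n m)` obeys the three-term recurrence of a
tridiagonal determinant, `D_{n+2} = q_{m+n+1} D_{n+1} - p_{m+n} · u_{m+n+1} v̄_{m+n+1} p_{m+n+2} · D_n`.
The sum `S_n` of the formula obeys the same recurrence with the factor `p_{m+n}` moved to the other
side, `p_{m+n+1} S_{n+2} = q_{m+n+1} S_{n+1} - u_{m+n+1} v̄_{m+n+1} p_{m+n+2} S_n`, since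
`S_{n+1} = u_{m+n+1} S_n + v̄_m ⋯ v̄_{m+n} p_{m+n+1}`. A two-step induction then gives
`D_{n+1} = p_{m+1} ⋯ p_{m+n} S_{n+1}`.
-/

section Tridiagonal

variable {R : Type*} [CommRing R]

def tridiagonal (a b c : ℕ → R) (n : ℕ) : Matrix (Fin n) (Fin n) R :=
  of fun i j =>
    if (i : ℕ) = j then a i
    else if (j : ℕ) = i + 1 then b i
    else if (i : ℕ) = j + 1 then c j
    else 0

variable (a b c : ℕ → R)

lemma tridiagonal_submatrix_castSucc (n : ℕ) :
    (tridiagonal a b c (n + 1)).submatrix Fin.castSucc Fin.castSucc = tridiagonal a b c n := by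
  ext i j
  simp [tridiagonal]

lemma det_tridiagonal_minor (n : ℕ) :
    ((tridiagonal a b c (n + 2)).submatrix Fin.castSucc (Fin.last n).castSucc.succAbove).det =
      b n * (tridiagonal a b c n).det := by
  have hminor : ((tridiagonal a b c (n + 2)).submatrix Fin.castSucc
      (Fin.last n).castSucc.succAbove).submatrix (Fin.last n).succAbove (Fin.last n).succAbove =
      tridiagonal a b c n := by
    ext i j
    simp [tridiagonal, Fin.succAbove_of_castSucc_lt, Fin.castSucc_lt_last]
  rw [det_succ_column _ (Fin.last n), Fin.sum_univ_castSucc, sum_eq_zero, zero_add, hminor]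
  · simp [tridiagonal, ← two_mul, pow_mul]
  · intro i _
    have := i.isLt
    simp [tridiagonal, Fin.succAbove_of_le_castSucc]
    split_ifs <;> first | rfl | omega

lemma det_tridiagonal_succ_succ (n : ℕ) :
    (tridiagonal a b c (n + 2)).det =
      a (n + 1) * (tridiagonal a b c (n + 1)).det - b n * c n * (tridiagonal a b c n).det := by
  have hdiag : tridiagonal a b c (n + 2) (Fin.last _) (Fin.last _) = a (n + 1) := by
    simp [tridiagonal]
  have hsub : tridiagonal a b c (n + 2) (Fin.last _) (Fin.last n).castSucc = c n := by
    simp only [tridiagonal, of_apply, Fin.val_last, Fin.val_castSucc]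
    rw [if_neg (by omega), if_neg (by omega), if_pos trivial]
  rw [det_succ_row _ (Fin.last (n + 1)), Fin.sum_univ_castSucc, Fin.sum_univ_castSucc, sum_eq_zero,
    zero_add, Fin.succAbove_last, det_tridiagonal_minor, tridiagonal_submatrix_castSucc, hdiag, hsub]
  · simp only [Fin.val_last, Fin.val_castSucc]
    rw [show n + 1 + n = 2 * n + 1 by ring, show n + 1 + (n + 1) = 2 * (n + 1) by ring,
      pow_succ, pow_mul, pow_mul]
    norm_num
    ring
  · intro j _
    have := j.isLt
    simp [tridiagonal]
    split_ifs <;> first | rfl | omega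

lemma eq_prod_mul_of_recurrences {D S α π γ : ℕ → R}
    (hD : ∀ n, D (n + 2) = α (n + 1) * D (n + 1) - π n * γ n * D n)
    (hS : ∀ n, π (n + 1) * S (n + 2) = α (n + 1) * S (n + 1) - γ n * S n)
    (h₀ : π 0 * D 0 = S 0) (h₁ : D 1 = S 1) (n : ℕ) :
    D (n + 1) = (∏ i ∈ range n, π (i + 1)) * S (n + 1) := by
  induction n using Nat.twoStepInduction with
  | zero => simpa using h₁
  | one =>
    rw [prod_range_one]
    linear_combination hD 0 + α 1 * h₁ - γ 0 * h₀ - hS 0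
  | more n ih₀ ih₁ =>
    rw [prod_range_succ] at ih₁
    rw [prod_range_succ, prod_range_succ]
    linear_combination hD (n + 1) + α (n + 2) * ih₁ - π (n + 1) * γ (n + 1) * ih₀ -
      (∏ i ∈ range n, π (i + 1)) * π (n + 1) * hS (n + 1)

end Tridiagonal

section BKP

variable (u vb : ℤ → ℂ) (m : ℤ)

def bkpSum (n : ℕ) : ℂ :=
  ∑ j ∈ range (n + 1),
    (∏ k ∈ range j, vb (m + k)) * (u (m + j) * vb (m + j) - 1) * ∏ k ∈ Icc (j + 1) n, u (m + k)

lemma bkpSum_zero : bkpSum u vb m 0 = pBKP u vb m := by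
  simp [bkpSum, pBKP]

lemma bkpSum_succ (n : ℕ) :
    bkpSum u vb m (n + 1) =
      u (m + (n + 1 : ℕ)) * bkpSum u vb m n +
        (∏ k ∈ range (n + 1), vb (m + k)) * pBKP u vb (m + (n + 1 : ℕ)) := by
  rw [bkpSum, sum_range_succ, Icc_eq_empty (by omega), prod_empty, mul_one, bkpSum, mul_sum]
  congr 1
  refine sum_congr rfl fun j hj => ?_
  rw [prod_Icc_succ_top (by simp at hj; omega)]
  ring

lemma bkpSum_recurrence (n : ℕ) :
    pBKP u vb (m + (n + 1 : ℕ)) * bkpSum u vb m (n + 2) =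
      qBKP u vb (m + (n + 1 : ℕ)) * bkpSum u vb m (n + 1) -
        u (m + (n + 1 : ℕ)) * vb (m + (n + 1 : ℕ)) * pBKP u vb (m + (n + 1 : ℕ) + 1) *
          bkpSum u vb m n := by
  rw [bkpSum_succ, bkpSum_succ, qBKP]
  simp only [prod_range_succ]
  push_cast
  ring_nf

lemma triMat_eq_tridiagonal (n : ℕ) :
    triMat u vb n m =
      tridiagonal (fun i => qBKP u vb (m + i)) (fun i => -pBKP u vb (m + i))
        (fun i => -(u (m + (i + 1 : ℕ)) * vb (m + (i + 1 : ℕ)) *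
          pBKP u vb (m + (i + 1 : ℕ) + 1))) n := by
  ext i j
  simp only [triMat, tridiagonal, of_apply, Fin.ext_iff]
  split_ifs <;> simp_all

lemma det_triMat_succ_succ (n : ℕ) :
    (triMat u vb (n + 2) m).det =
      qBKP u vb (m + (n + 1 : ℕ)) * (triMat u vb (n + 1) m).det -
        pBKP u vb (m + n) *
          (u (m + (n + 1 : ℕ)) * vb (m + (n + 1 : ℕ)) * pBKP u vb (m + (n + 1 : ℕ) + 1)) *
          (triMat u vb n m).det := by
  simp only [triMat_eq_tridiagonal, det_tridiagonal_succ_succ]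
  ring

end BKP

theorem triDet_formula (u vb : ℤ → ℂ) (n : ℕ) (hn : 1 ≤ n) (m : ℤ) :
    (triMat u vb n m).det =
      (∏ i ∈ Finset.range (n - 1), (u (m + i + 1) * vb (m + i + 1) - 1)) *
        ∑ j ∈ Finset.range (n + 1),
          (∏ k ∈ Finset.range j, vb (m + k)) *
            (u (m + j) * vb (m + j) - 1) *
            ∏ k ∈ Finset.Icc (j + 1) n, u (m + k) := by
  obtain ⟨n, rfl⟩ := Nat.exists_eq_add_of_le' hn
  have h₀ : pBKP u vb (m + (0 : ℕ)) * (triMat u vb 0 m).det = bkpSum u vb m 0 := by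
    simp [bkpSum_zero]
  have h₁ : (triMat u vb 1 m).det = bkpSum u vb m 1 := by
    simp [triMat, bkpSum_succ, bkpSum_zero, qBKP]
    ring
  have h := eq_prod_mul_of_recurrences (D := fun k => (triMat u vb k m).det)
    (α := fun k => qBKP u vb (m + k)) (π := fun k => pBKP u vb (m + k))
    (γ := fun k => u (m + (k + 1 : ℕ)) * vb (m + (k + 1 : ℕ)) * pBKP u vb (m + (k + 1 : ℕ) + 1))
    (det_triMat_succ_succ u vb m) (bkpSum_recurrence u vb m) h₀ h₁ n
  rw [h, Nat.add_sub_cancel]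
  push_cast
  simp only [pBKP, add_assoc, bkpSum]
end

section
/- Suppose the variables (u_j, v_j, ū_j, v̄_j)_{j ∈ ℤ/Nℤ} satisfy the Yang–Baxter relations ū_j = u_j·g_j(u,v̄)/g_{j+1}(u,v̄) and v_j = v̄_j·g_{j+1}(u,v̄)/g_j(u,v̄) for all j, where g_j(u,v̄) = Σ_{k=0}^{N−1} ∏_{l=0}^{k−1} v̄_{j+l} · (u_{j+k}v̄_{j+k} − 1) · ∏_{l=k+1}^{N−1} u_{j+l} (indices mod N, all g_j ≠ 0). Then for all j and all 0 ≤ m ≤ N−1, g_j^{(m)}(ū, v) = g_j^{(m)}(v̄, u), where g_j^{(m)}(a,b) = Σ_{k=0}^{m} ∏_{l=0}^{k−1} a_{j+l} · (a_{j+k}b_{j+k} − 1) · ∏_{l=k+1}^{m} b_{j+l}. -/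
open Finset

/-- `g_j^{(m)}(a,b) = Σ_{k=0}^{m} ∏_{l=0}^{k−1} a_{j+l} · (a_{j+k}b_{j+k} − 1) ·
∏_{l=k+1}^{m} b_{j+l}`, indices mod `N`. -/
noncomputable def gPartAB {N : ℕ} (a b : ZMod N → ℂ) (j : ZMod N) (m : ℕ) : ℂ :=
  ∑ k ∈ Finset.range (m + 1),
    (∏ l ∈ Finset.range k, a (j + (l : ℕ))) *
      (a (j + (k : ℕ)) * b (j + (k : ℕ)) - 1) *
      ∏ l ∈ Finset.Icc (k + 1) m, b (j + (l : ℕ))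

/-- `g_j(u,v̄) = Σ_{k=0}^{N−1} ∏_{l=0}^{k−1} v̄_{j+l} · (u_{j+k}v̄_{j+k} − 1) ·
∏_{l=k+1}^{N−1} u_{j+l}`. -/
noncomputable def gBKP {N : ℕ} (u vb : ZMod N → ℂ) (j : ZMod N) : ℂ :=
  ∑ k ∈ Finset.range N,
    (∏ l ∈ Finset.range k, vb (j + (l : ℕ))) *
      (u (j + (k : ℕ)) * vb (j + (k : ℕ)) - 1) *
      ∏ l ∈ Finset.Icc (k + 1) (N - 1), u (j + (l : ℕ))

lemma prod_cyc {N : ℕ} [NeZero N] (f : ZMod N → ℂ) (j : ZMod N) :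
    ∏ l ∈ Finset.range N, f (j + (l : ℕ)) = ∏ x : ZMod N, f x := by
  have h1 : ∏ l ∈ Finset.range N, f (j + (l : ℕ)) = ∏ x : ZMod N, f (j + x) := by
    refine Finset.prod_nbij (fun l => ((l : ℕ) : ZMod N)) (fun a _ => Finset.mem_univ _)
      ?_ ?_ (fun a _ => rfl)
    · intro a ha b hb h
      simp only [Finset.coe_range, Set.mem_Iio] at ha hb
      have := congrArg ZMod.val h
      rwa [ZMod.val_natCast_of_lt ha, ZMod.val_natCast_of_lt hb] at this
    · intro x _
      exact ⟨x.val, by simpa using x.val_lt, ZMod.natCast_zmod_val x⟩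
  rw [h1]
  exact Fintype.prod_equiv (Equiv.addLeft j) _ _ (fun x => rfl)


lemma gPart_succ {N : ℕ} (a b : ZMod N → ℂ) (j : ZMod N) (m : ℕ) :
    gPartAB a b j (m+1) = gPartAB a b j m * b (j + ((m+1 : ℕ) : ZMod N)) +
      (∏ l ∈ Finset.range (m+1), a (j + (l : ℕ))) *
        (a (j + ((m+1:ℕ) : ZMod N)) * b (j + ((m+1:ℕ) : ZMod N)) - 1) := by
  unfold gPartAB
  rw [Finset.sum_range_succ]
  have h1 : Finset.Icc (m+1+1) (m+1) = ∅ := by rw [Finset.Icc_eq_empty]; omega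
  rw [h1, Finset.prod_empty, mul_one]
  congr 1
  rw [Finset.sum_mul]
  refine Finset.sum_congr rfl fun k hk => ?_
  rw [Finset.mem_range] at hk
  rw [Finset.prod_Icc_succ_top (by omega : k+1 ≤ m+1)]
  ring

lemma icc_shift {N : ℕ} (f : ZMod N → ℂ) (j : ZMod N) (k m : ℕ) :
    ∏ l ∈ Finset.Icc (k+1) (m+1), f (j + (l : ℕ)) =
      ∏ l ∈ Finset.Icc k m, f ((j+1) + (l : ℕ)) := by
  rw [← Finset.Ico_add_one_right_eq_Icc, ← Finset.Ico_add_one_right_eq_Icc,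
    Finset.prod_Ico_eq_prod_range, Finset.prod_Ico_eq_prod_range]
  have hsz : m + 1 + 1 - (k + 1) = m + 1 - k := by omega
  rw [hsz]
  refine Finset.prod_congr rfl fun i _ => ?_
  congr 1
  push_cast
  ring

lemma gPart_front {N : ℕ} (a b : ZMod N → ℂ) (j : ZMod N) (m : ℕ) :
    gPartAB a b j (m+1) =
      (a j * b j - 1) * (∏ l ∈ Finset.Icc 1 (m+1), b (j + (l : ℕ))) +
      a j * gPartAB a b (j+1) m := by
  have hc : ∀ l : ℕ, j + ((l+1 : ℕ) : ZMod N) = (j+1) + (l : ℕ) := by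
    intro l; push_cast; ring
  unfold gPartAB
  rw [Finset.sum_range_succ']
  have h2 : ∀ k ∈ Finset.range (m+1),
      (∏ l ∈ Finset.range (k+1), a (j + (l:ℕ))) *
        (a (j + ((k+1:ℕ):ZMod N)) * b (j + ((k+1:ℕ):ZMod N)) - 1) *
        ∏ l ∈ Finset.Icc (k+1+1) (m+1), b (j + (l:ℕ))
      = a j * ((∏ l ∈ Finset.range k, a ((j+1) + (l:ℕ))) *
        (a ((j+1) + (k:ℕ)) * b ((j+1) + (k:ℕ)) - 1) *
        ∏ l ∈ Finset.Icc (k+1) m, b ((j+1) + (l:ℕ))) := by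
    intro k _
    have ha : ∀ l ∈ Finset.range k, a (j + ((l+1:ℕ) : ZMod N)) = a ((j+1) + (l : ℕ)) := by
      intro l _; rw [hc l]
    rw [Finset.prod_range_succ', Finset.prod_congr rfl ha, icc_shift b j (k+1) m, hc k]
    simp only [Nat.cast_zero, add_zero]
    ring
  rw [Finset.sum_congr rfl h2, ← Finset.mul_sum, add_comm]
  congr 1
  simp only [Finset.range_zero, Finset.prod_empty, one_mul, Nat.cast_zero, add_zero,
    Nat.zero_add]

lemma icc_one {N : ℕ} (f : ZMod N → ℂ) (j : ZMod N) (m : ℕ) :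
    ∏ l ∈ Finset.Icc 1 m, f (j + (l : ℕ)) =
      ∏ l ∈ Finset.range m, f (j + ((l+1 : ℕ) : ZMod N)) := by
  rw [← Finset.Ico_add_one_right_eq_Icc, Finset.prod_Ico_eq_prod_range]
  have : m + 1 - 1 = m := by omega
  rw [this]
  refine Finset.prod_congr rfl fun i _ => ?_
  congr 1; push_cast; ring

lemma gBKP_eq {N : ℕ} (hN : 1 ≤ N) (u vb : ZMod N → ℂ) (j : ZMod N) :
    gBKP u vb j = gPartAB vb u j (N-1) := by
  unfold gBKP gPartAB
  rw [Nat.sub_add_cancel hN]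
  exact Finset.sum_congr rfl fun k _ => by ring

lemma key {N : ℕ} [NeZero N] (hN : 3 ≤ N) (u vb : ZMod N → ℂ) (j : ZMod N) :
    u j * gBKP u vb j - vb j * gBKP u vb (j+1) =
      (u j * vb j - 1) * ((∏ x : ZMod N, u x) - ∏ x : ZMod N, vb x) := by
  obtain ⟨n, rfl⟩ : ∃ n, N = n + 2 := ⟨N - 2, by omega⟩
  rw [gBKP_eq (by omega) u vb j, gBKP_eq (by omega) u vb (j+1)]
  have hsub : n + 2 - 1 = n + 1 := rfl
  rw [hsub, gPart_front vb u j n, gPart_succ vb u (j+1) n]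
  have hj : (j+1) + ((n+1 : ℕ) : ZMod (n+2)) = j := by
    have h0 : ((n+2 : ℕ) : ZMod (n+2)) = 0 := ZMod.natCast_self _
    push_cast at h0 ⊢
    linear_combination h0
  rw [hj]
  have hQ : ∏ l ∈ Finset.range (n+1), vb ((j+1) + (l:ℕ)) =
      ∏ l ∈ Finset.Icc 1 (n+1), vb (j + (l:ℕ)) := by
    rw [icc_one]
    refine Finset.prod_congr rfl fun i _ => ?_
    congr 1; push_cast; ring
  rw [hQ]
  have hU : (∏ x : ZMod (n+2), u x) =
      u j * ∏ l ∈ Finset.Icc 1 (n+1), u (j + (l:ℕ)) := by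
    rw [icc_one, ← prod_cyc u j, Finset.prod_range_succ']
    simp only [Nat.cast_zero, add_zero]
    ring
  have hV : (∏ x : ZMod (n+2), vb x) =
      vb j * ∏ l ∈ Finset.Icc 1 (n+1), vb (j + (l:ℕ)) := by
    rw [icc_one, ← prod_cyc vb j, Finset.prod_range_succ']
    simp only [Nat.cast_zero, add_zero]
    ring
  linear_combination (u j * vb j - 1) * hV - (u j * vb j - 1) * hU

lemma prod_ub {N : ℕ} (u ub vb : ZMod N → ℂ) (hg : ∀ j, gBKP u vb j ≠ 0)
    (hu : ∀ j, ub j = u j * gBKP u vb j / gBKP u vb (j+1)) (j : ZMod N) :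
    ∀ m : ℕ, (∏ l ∈ Finset.range m, ub (j + (l:ℕ))) * gBKP u vb (j + (m:ℕ)) =
      (∏ l ∈ Finset.range m, u (j + (l:ℕ))) * gBKP u vb j := by
  intro m
  induction m with
  | zero => simp
  | succ m ih =>
    have hx : j + ((m+1:ℕ) : ZMod N) = (j + (m:ℕ)) + 1 := by push_cast; ring
    have hub : ub (j + (m:ℕ)) * gBKP u vb ((j + (m:ℕ)) + 1) =
        u (j + (m:ℕ)) * gBKP u vb (j + (m:ℕ)) := by
      rw [hu (j + (m:ℕ))]
      exact div_mul_cancel₀ _ (hg _)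
    rw [Finset.prod_range_succ, Finset.prod_range_succ, hx]
    linear_combination (∏ l ∈ Finset.range m, ub (j + (l:ℕ))) * hub +
      u (j + (m:ℕ)) * ih

lemma keyE {N : ℕ} [NeZero N] (hN : 3 ≤ N) (u vb : ZMod N → ℂ) (j : ZMod N) :
    ∀ m : ℕ, gPartAB vb u j m * ((∏ x : ZMod N, u x) - ∏ x : ZMod N, vb x) =
      (∏ l ∈ Finset.range (m+1), u (j + (l:ℕ))) * gBKP u vb j -
      (∏ l ∈ Finset.range (m+1), vb (j + (l:ℕ))) *
        gBKP u vb (j + ((m+1:ℕ) : ZMod N)) := by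
  intro m
  induction m with
  | zero =>
    have h0 : gPartAB vb u j 0 = vb j * u j - 1 := by
      unfold gPartAB
      rw [Finset.sum_range_one, Finset.Icc_eq_empty (by omega), Finset.prod_empty]
      simp
    rw [h0, Finset.prod_range_one, Finset.prod_range_one]
    have h1 : j + ((0+1:ℕ) : ZMod N) = j + 1 := by push_cast; ring
    rw [h1]
    simp only [Nat.cast_zero, add_zero]
    linear_combination -key hN u vb j
  | succ m ih =>
    have hk := key hN u vb (j + ((m+1:ℕ) : ZMod N))
    have hx : (j + ((m+1:ℕ):ZMod N)) + 1 = j + ((m+1+1:ℕ):ZMod N) := by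
      push_cast; ring
    rw [hx] at hk
    rw [gPart_succ vb u j m, Finset.prod_range_succ (fun l => u (j + (l:ℕ))) (m+1),
      Finset.prod_range_succ (fun l => vb (j + (l:ℕ))) (m+1)]
    linear_combination u (j + ((m+1:ℕ):ZMod N)) * ih -
      (∏ l ∈ Finset.range (m+1), vb (j + (l:ℕ))) * hk

theorem covariant_quantities (N : ℕ) (hN : 3 ≤ N)
    (u v ub vb : ZMod N → ℂ)
    (hg : ∀ j : ZMod N, gBKP u vb j ≠ 0)
    (hu : ∀ j : ZMod N, ub j = u j * gBKP u vb j / gBKP u vb (j + 1))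
    (hv : ∀ j : ZMod N, v j = vb j * gBKP u vb (j + 1) / gBKP u vb j) :
    ∀ (j : ZMod N) (m : ℕ), m ≤ N - 1 →
      gPartAB ub v j m = gPartAB vb u j m := by
  haveI : NeZero N := ⟨by omega⟩
  have huv : ∀ x : ZMod N, ub x * v x = u x * vb x := by
    intro x
    rw [hu x, hv x]
    field_simp [hg x, hg (x+1)]
  have hdiff : ∀ x : ZMod N, v x * gBKP u vb x =
      u x * gBKP u vb x -
        (u x * vb x - 1) * ((∏ y : ZMod N, u y) - ∏ y : ZMod N, vb y) := by
    intro x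
    have h1 : v x * gBKP u vb x = vb x * gBKP u vb (x+1) := by
      rw [hv x]
      exact div_mul_cancel₀ _ (hg _)
    linear_combination h1 - key hN u vb x
  intro j m _
  induction m with
  | zero =>
    have h0 : ∀ a b : ZMod N → ℂ, gPartAB a b j 0 = a j * b j - 1 := by
      intro a b
      unfold gPartAB
      rw [Finset.sum_range_one, Finset.Icc_eq_empty (by omega), Finset.prod_empty]
      simp
    rw [h0, h0]
    linear_combination huv j
  | succ m ih =>
    have ih' := ih (by omega)
    rw [gPart_succ ub v j m, gPart_succ vb u j m]
    set x := j + ((m+1:ℕ) : ZMod N) with hxdef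
    have hD := prod_ub u ub vb hg hu j (m+1)
    have hE := keyE hN u vb j m
    have hgx := hg x
    have hmain : (gPartAB ub v j m * v x +
        (∏ l ∈ Finset.range (m+1), ub (j + (l:ℕ))) * (ub x * v x - 1)) * gBKP u vb x =
        (gPartAB vb u j m * u x +
        (∏ l ∈ Finset.range (m+1), vb (j + (l:ℕ))) * (vb x * u x - 1)) * gBKP u vb x := by
      linear_combination (v x * gBKP u vb x) * ih' +
        ((∏ l ∈ Finset.range (m+1), ub (j + (l:ℕ))) * gBKP u vb x) * huv x +
        gPartAB vb u j m * hdiff x +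
        (1 - u x * vb x) * hE + (u x * vb x - 1) * hD
    exact mul_right_cancel₀ hgx hmain
end
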